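/- arXiv:2006.04635 — 2 statements merged into one kernel-verified Lean document; each statement's English description precedes it below -/
import Mathlib

section
/- Continuous-time fictitious play has bounded (O(1)) regret: let r : [0,∞) → ℝ^A be a bounded measurable reward stream on a finite action set A, and for t ≥ 1 let b_t ∈ argmax_{p} ⟨p, ∫_0^t r_s ds⟩ over probability distributions p, with b_t arbitrary measurable for t < 1. Then for all T ≥ 1, max_p ∫_0^T ⟨p, r_s⟩ ds − ∫_0^T ⟨b_s, r_s⟩ ds = max_p ∫_0^1 ⟨p, r_s⟩ ds − ∫_0^1 ⟨b_s, r_s⟩ ds, which is bounded independently of T. -/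
open Real BigOperators MeasureTheory intervalIntegral

def IsDist {A : Type*} [Fintype A] (p : A → ℝ) : Prop :=
  (∀ a, 0 ≤ p a) ∧ ∑ a, p a = 1

/-!
Let `R a t = ∫₀ᵗ r s a` and `F t = maxₐ R a t`. The best fixed distribution earns `F T` on
`[0, T]`, while fictitious play earns `K T = ∫₀ᵀ ⟨b s, r s⟩ ds`, so the regret is `F T - K T`.
Both `F` and `K` are Lipschitz. For `t ≥ 1` the distribution `b t` is supported on maximizers of
`R · t`, and each such `R a` touches `F` from below at `t`; wherever everything is
differentiable this forces `F' t = ⟨b t, r t⟩ = K' t` (envelope theorem). Hence `F - K` is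
Lipschitz with vanishing derivative almost everywhere on `[1, ∞)`, so it is constant there.
-/

open Filter Topology Finset NNReal

section Primitive

variable {E : Type*} [NormedAddCommGroup E] {f : ℝ → E} {C : ℝ≥0}

lemma locallyIntegrable_of_norm_le (hf : AEStronglyMeasurable f volume)
    (hC : ∀ x, ‖f x‖ ≤ C) : LocallyIntegrable f volume :=
  (locallyIntegrable_const (C : ℝ)).mono hf
    (ae_of_all _ fun x => (hC x).trans (le_abs_self _))

lemma MeasureTheory.LocallyIntegrable.intervalIntegrable (hf : LocallyIntegrable f volume)
    (a b : ℝ) : IntervalIntegrable f volume a b :=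
  intervalIntegrable_iff.mpr <|
    (hf.integrableOn_isCompact isCompact_uIcc).mono_set Set.uIoc_subset_uIcc

lemma lipschitzWith_primitive_of_norm_le [NormedSpace ℝ E] (hf : LocallyIntegrable f volume)
    (hC : ∀ x, ‖f x‖ ≤ C) (c : ℝ) : LipschitzWith C fun t => ∫ s in c..t, f s :=
  LipschitzWith.of_dist_le_mul fun t u => by
    rw [dist_eq_norm, integral_interval_sub_left (hf.intervalIntegrable _ _)
      (hf.intervalIntegrable _ _), Real.dist_eq]
    exact norm_integral_le_of_norm_le_const fun x _ => hC x

end Primitive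

section Simplex

variable {ι : Type*} [Fintype ι] {q : ι → ℝ} {v : ι → ℝ} {c : ℝ}

lemma IsDist.sum_mul_const (hq : IsDist q) (c : ℝ) : ∑ i, q i * c = c := by
  rw [← sum_mul, hq.2, one_mul]

lemma IsDist.sum_mul_le (hq : IsDist q) (hv : ∀ i, v i ≤ c) : ∑ i, q i * v i ≤ c :=
  (sum_le_sum fun i _ => mul_le_mul_of_nonneg_left (hv i) (hq.1 i)).trans_eq (hq.sum_mul_const c)

lemma IsDist.abs_sum_mul_le (hq : IsDist q) (hv : ∀ i, |v i| ≤ c) : |∑ i, q i * v i| ≤ c :=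
  calc |∑ i, q i * v i| ≤ ∑ i, |q i * v i| := abs_sum_le_sum_abs _ _
    _ = ∑ i, q i * |v i| := by simp_rw [abs_mul, abs_of_nonneg (hq.1 _)]
    _ ≤ c := hq.sum_mul_le hv

lemma isDist_pi_single [DecidableEq ι] (i : ι) : IsDist (Pi.single i 1 : ι → ℝ) :=
  ⟨fun j => by by_cases h : j = i <;> simp [h], by simp⟩

variable [Nonempty ι]

lemma IsDist.sum_mul_le_sup' (hq : IsDist q) (v : ι → ℝ) :
    ∑ i, q i * v i ≤ univ.sup' univ_nonempty v :=
  hq.sum_mul_le fun i => le_sup' v (mem_univ i)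

lemma isGreatest_isDist_sum_mul (v : ι → ℝ) :
    IsGreatest {x | ∃ p, IsDist p ∧ x = ∑ i, p i * v i} (univ.sup' univ_nonempty v) := by
  classical
  obtain ⟨i, -, hi⟩ := exists_mem_eq_sup' univ_nonempty v
  refine ⟨⟨Pi.single i 1, isDist_pi_single i, by simp [hi, Pi.single_apply]⟩, ?_⟩
  rintro x ⟨p, hp, rfl⟩
  exact hp.sum_mul_le_sup' v

lemma IsDist.sum_mul_eq_sup' (hq : IsDist q)
    (hmax : ∀ p, IsDist p → ∑ i, p i * v i ≤ ∑ i, q i * v i) :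
    ∑ i, q i * v i = univ.sup' univ_nonempty v :=
  le_antisymm (hq.sum_mul_le_sup' v) <| by
    obtain ⟨p, hp, hpv⟩ := (isGreatest_isDist_sum_mul v).1
    exact hpv.trans_le (hmax p hp)

lemma IsDist.apply_eq_sup'_of_sum_mul_eq (hq : IsDist q)
    (h : ∑ i, q i * v i = univ.sup' univ_nonempty v) {i : ι} (hi : q i ≠ 0) :
    v i = univ.sup' univ_nonempty v := by
  have hgap : ∑ j, q j * (univ.sup' univ_nonempty v - v j) = 0 := by
    simp_rw [mul_sub, sum_sub_distrib, hq.sum_mul_const, h, sub_self]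
  have hzero := (sum_eq_zero_iff_of_nonneg fun j _ =>
    mul_nonneg (hq.1 j) (sub_nonneg.2 (le_sup' v (mem_univ j)))).1 hgap i (mem_univ i)
  linarith [sub_eq_zero.1 ((mul_eq_zero.1 hzero).resolve_left hi)]

end Simplex

section Envelope

variable {ι : Type*} [Fintype ι] [Nonempty ι]

lemma HasDerivAt.eq_of_eventuallyLE_of_eq {f g : ℝ → ℝ} {f' g' x : ℝ}
    (hg : HasDerivAt g g' x) (hf : HasDerivAt f f' x) (hle : g ≤ᶠ[𝓝 x] f)
    (heq : g x = f x) : g' = f' := by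
  have hmin : IsLocalMin (fun t => f t - g t) x :=
    hle.mono fun t ht => by simp only [heq, sub_self, sub_nonneg]; exact ht
  linarith [hmin.hasDerivAt_eq_zero (hf.sub hg)]

lemma LipschitzWith.finset_sup' {α : Type*} [PseudoMetricSpace α] {R : ι → α → ℝ} {C : ℝ≥0}
    (hR : ∀ i, LipschitzWith C (R i)) :
    LipschitzWith C fun t => univ.sup' univ_nonempty fun i => R i t :=
  LipschitzWith.of_le_add_mul C fun t u => sup'_le _ _ fun i _ =>
    ((hR i).le_add_mul t u).trans (by gcongr; exact le_sup' (fun i => R i u) (mem_univ i))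

lemma HasDerivAt.finset_sup'_eq_sum_mul {R : ι → ℝ → ℝ} {r : ι → ℝ} {D x : ℝ} {q : ι → ℝ}
    (hF : HasDerivAt (fun t => univ.sup' univ_nonempty fun i => R i t) D x)
    (hR : ∀ i, HasDerivAt (R i) (r i) x) (hq : IsDist q)
    (hqx : ∑ i, q i * R i x = univ.sup' univ_nonempty fun i => R i x) :
    D = ∑ i, q i * r i := by
  have hr : ∀ i, q i ≠ 0 → r i = D := fun i hi =>
    (hR i).eq_of_eventuallyLE_of_eq hF
      (Eventually.of_forall fun t => le_sup' (fun i => R i t) (mem_univ i))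
      (hq.apply_eq_sup'_of_sum_mul_eq hqx hi)
  calc D = ∑ i, q i * D := (hq.sum_mul_const D).symm
    _ = ∑ i, q i * r i := sum_congr rfl fun i _ => by
      by_cases hi : q i = 0
      · simp [hi]
      · rw [hr i hi]

lemma ae_hasDerivAt_finset_sup' {R : ι → ℝ → ℝ} {r : ℝ → ι → ℝ} {C : ℝ≥0}
    (hR : ∀ i, LipschitzWith C (R i)) (hr : ∀ᵐ x, ∀ i, HasDerivAt (R i) (r x i) x) :
    ∀ᵐ x, ∀ q, IsDist q → ∑ i, q i * R i x = univ.sup' univ_nonempty (fun i => R i x) →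
      HasDerivAt (fun t => univ.sup' univ_nonempty fun i => R i t) (∑ i, q i * r x i) x := by
  filter_upwards [(LipschitzWith.finset_sup' hR).ae_differentiableAt_real, hr]
    with x hF hRx q hq hqx
  rw [← hF.hasDerivAt.finset_sup'_eq_sum_mul hRx hq hqx]
  exact hF.hasDerivAt

end Envelope

lemma sSup_integral_isDist_sum_mul {ι : Type*} [Fintype ι] [Nonempty ι] {r : ℝ → ι → ℝ}
    {u v : ℝ} (hr : ∀ i, IntervalIntegrable (fun s => r s i) volume u v) :
    sSup {x | ∃ p : ι → ℝ, IsDist p ∧ x = ∫ s in u..v, ∑ i, p i * r s i}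
      = univ.sup' univ_nonempty fun i => ∫ s in u..v, r s i := by
  have hsum : ∀ p : ι → ℝ, ∫ s in u..v, ∑ i, p i * r s i = ∑ i, p i * ∫ s in u..v, r s i :=
    fun p => by
      rw [integral_finsetSum fun i _ => (hr i).const_mul (p i)]
      simp_rw [intervalIntegral.integral_const_mul]
  simp_rw [hsum]
  exact (isGreatest_isDist_sum_mul _).csSup_eq

/-- Continuous-time fictitious play has O(1) regret: the unregularized regret over `[0, T]`
equals the regret over `[0, 1]`, a quantity independent of `T`. -/
theorem cfp_bounded_regret {A : Type*} [Fintype A] [Nonempty A]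
    (r : ℝ → A → ℝ) (b : ℝ → A → ℝ)
    (hrmeas : ∀ a, Measurable (fun s => r s a))
    (hrbdd : ∃ M : ℝ, ∀ s a, |r s a| ≤ M)
    (hbmeas : ∀ a, Measurable (fun s => b s a))
    (hbdist : ∀ t, IsDist (b t))
    (hbr : ∀ t ≥ (1:ℝ), ∀ p : A → ℝ, IsDist p →
      ∑ a, p a * (∫ s in (0:ℝ)..t, r s a) ≤ ∑ a, b t a * (∫ s in (0:ℝ)..t, r s a)) :
    ∀ T ≥ (1:ℝ),
      sSup {x : ℝ | ∃ p : A → ℝ, IsDist p ∧ x = ∫ s in (0:ℝ)..T, ∑ a, p a * r s a}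
        - (∫ s in (0:ℝ)..T, ∑ a, b s a * r s a)
      = sSup {x : ℝ | ∃ p : A → ℝ, IsDist p ∧ x = ∫ s in (0:ℝ)..(1:ℝ), ∑ a, p a * r s a}
        - (∫ s in (0:ℝ)..(1:ℝ), ∑ a, b s a * r s a) := by
  intro T hT
  obtain ⟨M, hM⟩ := hrbdd
  have hrC : ∀ a s, |r s a| ≤ M.toNNReal := fun a s => (hM s a).trans (Real.le_coe_toNNReal M)
  have hψC : ∀ s, |∑ a, b s a * r s a| ≤ M.toNNReal := fun s =>
    (hbdist s).abs_sum_mul_le (hrC · s)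
  have hr : ∀ a, LocallyIntegrable (fun s => r s a) volume := fun a =>
    locallyIntegrable_of_norm_le (hrmeas a).aestronglyMeasurable (hrC a)
  have hψ : LocallyIntegrable (fun s => ∑ a, b s a * r s a) volume :=
    locallyIntegrable_of_norm_le (by fun_prop) hψC
  have hRlip := fun a => lipschitzWith_primitive_of_norm_le (hr a) (hrC a) 0
  have hKlip := lipschitzWith_primitive_of_norm_le hψ hψC 0
  set F := fun t => univ.sup' univ_nonempty fun a => ∫ s in (0:ℝ)..t, r s a
  set K := fun t => ∫ s in (0:ℝ)..t, ∑ a, b s a * r s a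
  have hderiv : ∀ᵐ x, x ∈ Set.uIcc 1 T → HasDerivAt (F - K) 0 x := by
    filter_upwards [ae_hasDerivAt_finset_sup' hRlip (ae_all_iff.2 fun a =>
        (LocallyIntegrable.ae_hasDerivAt_integral (hr a)).mono fun x hx => hx 0),
      LocallyIntegrable.ae_hasDerivAt_integral hψ] with x hFx hKx hx
    have hx1 : 1 ≤ x := (Set.uIcc_of_le hT ▸ hx).1
    simpa using (hFx (b x) (hbdist x) ((hbdist x).sum_mul_eq_sup' (hbr x hx1))).sub (hKx 0)
  obtain ⟨c, hc⟩ := ((LipschitzWith.finset_sup' hRlip).sub hKlip).lipschitzOnWith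
    |>.absolutelyContinuousOnInterval.const_of_ae_hasDerivAt_zero hderiv
  rw [sSup_integral_isDist_sum_mul fun a => (hr a).intervalIntegrable 0 T,
    sSup_integral_isDist_sum_mul fun a => (hr a).intervalIntegrable 0 1]
  exact (hc T Set.right_mem_uIcc).trans (hc 1 Set.left_mem_uIcc).symm
end

section
/- Derivative of the entropy-regularized running maximum: let r : [0,∞) → ℝ^A be continuous and bounded, λ > 0, and define G(t) = max_p ∫_0^t (⟨p, r_s⟩ + λ·H(p)) ds = max_p (⟨p, ∫_0^t r_s ds⟩ + t·λ·H(p)). Then for t > 0, G is differentiable with G'(t) = ⟨b_t, r_t⟩ + λ·H(b_t), where b_t is the (unique) maximizer of ⟨p, (1/t)∫_0^t r_s ds⟩ + λ·H(p). -/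
open Real BigOperators MeasureTheory intervalIntegral

noncomputable def entropy {A : Type*} [Fintype A] (p : A → ℝ) : ℝ :=
  -∑ a, p a * Real.log (p a)

noncomputable def softmax {A : Type*} [Fintype A] (y : A → ℝ) : A → ℝ :=
  fun a => Real.exp (y a) / ∑ b, Real.exp (y b)

/-!
For `c > 0` the Gibbs variational principle gives
`max_p (⟨p, y⟩ + c H(p)) = c log ∑ exp (y / c)`, attained at `softmax (y / c)`.
Hence `G(t) = tλ log ∑_a exp (∫_0^t r_a / (tλ))` for `t > 0`, which is differentiable in `t`
by the fundamental theorem of calculus. Since the gradient of `log ∑ exp` is `softmax`,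
differentiating and using `H(softmax y) = log ∑ exp y - ⟨softmax y, y⟩` gives
`G'(t) = ⟨b_t, r_t⟩ + λ H(b_t)`.
-/

lemma mul_sub_mul_log_le_exp_sub {p : ℝ} (hp : 0 ≤ p) (z : ℝ) :
    p * z - p * log p ≤ exp z - p := by
  rcases hp.eq_or_lt with rfl | hp
  · simpa using (exp_pos z).le
  · have h := mul_le_mul_of_nonneg_left (add_one_le_exp (z - log p)) hp.le
    rw [exp_sub, exp_log hp, mul_div_cancel₀ _ hp.ne'] at h
    linarith

section Softmax

variable {A : Type*} [Fintype A]

lemma sum_mul_add_mul_entropy_eq {c : ℝ} (hc : c ≠ 0) (y p : A → ℝ) :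
    ∑ a, p a * y a + c * entropy p = c * (∑ a, p a * (y a / c) + entropy p) := by
  rw [mul_add, Finset.mul_sum]
  congr 1
  exact Finset.sum_congr rfl fun a _ => by field_simp

variable [Nonempty A]

lemma sum_exp_pos (y : A → ℝ) : 0 < ∑ a, exp (y a) :=
  Finset.sum_pos (fun _ _ => exp_pos _) Finset.univ_nonempty

lemma isDist_softmax (y : A → ℝ) : IsDist (softmax y) := by
  refine ⟨fun a => div_nonneg (exp_pos _).le (sum_exp_pos y).le, ?_⟩
  simp only [softmax]
  rw [← Finset.sum_div, div_self (sum_exp_pos y).ne']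

lemma log_softmax (y : A → ℝ) (a : A) :
    log (softmax y a) = y a - log (∑ b, exp (y b)) := by
  rw [softmax, log_div (exp_ne_zero _) (sum_exp_pos y).ne', log_exp]

lemma entropy_softmax (y : A → ℝ) :
    entropy (softmax y) = log (∑ a, exp (y a)) - ∑ a, softmax y a * y a := by
  simp only [entropy, log_softmax, mul_sub, Finset.sum_sub_distrib, ← Finset.sum_mul,
    (isDist_softmax y).2]
  ring

lemma sum_mul_add_entropy_le_log_sum_exp (y : A → ℝ) {p : A → ℝ} (hp : IsDist p) :
    ∑ a, p a * y a + entropy p ≤ log (∑ a, exp (y a)) := by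
  set L := log (∑ a, exp (y a))
  have hterm : ∀ a, p a * (y a - L) - p a * log (p a) ≤ softmax y a - p a := fun a => by
    rw [softmax, ← exp_log (sum_exp_pos y), ← exp_sub]
    exact mul_sub_mul_log_le_exp_sub (hp.1 a) _
  have hsum := Finset.sum_le_sum fun a (_ : a ∈ Finset.univ) => hterm a
  simp only [mul_sub, Finset.sum_sub_distrib, ← Finset.sum_mul, hp.2, (isDist_softmax y).2]
    at hsum
  rw [entropy]
  linarith

lemma isGreatest_sum_mul_add_mul_entropy (y : A → ℝ) {c : ℝ} (hc : 0 < c) :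
    IsGreatest {x | ∃ p : A → ℝ, IsDist p ∧ x = ∑ a, p a * y a + c * entropy p}
      (c * log (∑ a, exp (y a / c))) := by
  refine ⟨⟨softmax fun a => y a / c, isDist_softmax _, ?_⟩, ?_⟩
  · rw [sum_mul_add_mul_entropy_eq hc.ne', entropy_softmax]
    ring
  · rintro x ⟨p, hp, rfl⟩
    rw [sum_mul_add_mul_entropy_eq hc.ne']
    exact mul_le_mul_of_nonneg_left (sum_mul_add_entropy_le_log_sum_exp _ hp) hc.le

lemma sum_softmax_mul_add_mul_entropy {c : ℝ} (hc : c ≠ 0) (y : A → ℝ) :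
    ∑ a, softmax (fun a => y a / c) a * y a + c * entropy (softmax fun a => y a / c) =
      c * log (∑ a, exp (y a / c)) := by
  rw [sum_mul_add_mul_entropy_eq hc, entropy_softmax]
  ring

lemma HasDerivAt.log_sum_exp {y : ℝ → A → ℝ} {y' : A → ℝ} {t : ℝ}
    (hy : ∀ a, HasDerivAt (fun u => y u a) (y' a) t) :
    HasDerivAt (fun u => Real.log (∑ a, Real.exp (y u a))) (∑ a, softmax (y t) a * y' a) t := by
  convert (HasDerivAt.fun_sum fun a _ => (hy a).exp).log (sum_exp_pos _).ne' using 1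
  rw [Finset.sum_div]
  exact Finset.sum_congr rfl fun a _ => by rw [softmax]; ring

lemma hasDerivAt_mul_log_sum_exp_div {F : ℝ → A → ℝ} {f : A → ℝ} {c t : ℝ}
    (hF : ∀ a, HasDerivAt (fun u => F u a) (f a) t) (hc : c ≠ 0) (ht : t ≠ 0) :
    HasDerivAt (fun u => u * c * log (∑ a, exp (F u a / (u * c))))
      (∑ a, softmax (fun a => F t a / (t * c)) a * f a +
        c * entropy (softmax fun a => F t a / (t * c))) t := by
  have htc : t * c ≠ 0 := mul_ne_zero ht hc
  have hy : ∀ a, HasDerivAt (fun u => F u a / (u * c))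
      ((f a * (t * c) - F t a * c) / (t * c) ^ 2) t := fun a =>
    (hF a).div (hasDerivAt_mul_const c) htc
  refine ((hasDerivAt_mul_const c).mul (HasDerivAt.log_sum_exp hy)).congr_deriv ?_
  set q := softmax fun a => F t a / (t * c)
  have hterm : ∀ a, t * c * (q a * ((f a * (t * c) - F t a * c) / (t * c) ^ 2)) =
      q a * f a - c * (q a * (F t a / (t * c))) := fun a => by field_simp
  rw [entropy_softmax, Finset.mul_sum, Finset.sum_congr rfl fun a _ => hterm a,
    Finset.sum_sub_distrib, ← Finset.mul_sum]
  ring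

end Softmax

theorem deriv_entropy_regularized_running_max_general {A : Type*} [Fintype A] [Nonempty A]
    (r : ℝ → A → ℝ)
    (hrcont : ∀ a, Continuous (fun s => r s a))
    (lam : ℝ) (hlam : 0 < lam)
    (G : ℝ → ℝ)
    (hG : ∀ t, G t = sSup {x : ℝ | ∃ p : A → ℝ, IsDist p ∧
      x = (∑ a, p a * (∫ s in (0:ℝ)..t, r s a)) + t * lam * entropy p})
    (b : ℝ → A → ℝ)
    (hb : ∀ t, b t = softmax (fun a => (1 / (lam * t)) * ∫ s in (0:ℝ)..t, r s a)) :
    ∀ t > (0:ℝ),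
      (∀ p : A → ℝ, IsDist p →
        (∑ a, p a * ((1/t) * ∫ s in (0:ℝ)..t, r s a)) + lam * entropy p ≤
        (∑ a, b t a * ((1/t) * ∫ s in (0:ℝ)..t, r s a)) + lam * entropy (b t)) ∧
      HasDerivAt G ((∑ a, b t a * r t a) + lam * entropy (b t)) t := by
  intro t ht
  set F : ℝ → A → ℝ := fun u a => ∫ s in (0:ℝ)..u, r s a
  have hG_eq : G =ᶠ[nhds t] fun u => u * lam * log (∑ a, exp (F u a / (u * lam))) :=
    Filter.eventually_of_mem (Ioi_mem_nhds ht) fun u hu =>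
      (hG u).trans (isGreatest_sum_mul_add_mul_entropy (F u) (mul_pos hu hlam)).csSup_eq
  constructor
  · intro p hp
    have hbt : b t = softmax fun a => 1 / t * F t a / lam := by
      rw [hb]; congr 1; funext a; ring
    rw [hbt, sum_softmax_mul_add_mul_entropy hlam.ne']
    exact (isGreatest_sum_mul_add_mul_entropy _ hlam).2 ⟨p, hp, rfl⟩
  · have hbt : b t = softmax fun a => F t a / (t * lam) := by
      rw [hb]; congr 1; funext a; ring
    have hF : ∀ a, HasDerivAt (fun u => F u a) (r t a) t := fun a =>
      ((hrcont a).integral_hasStrictDerivAt 0 t).hasDerivAt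
    rw [hbt]
    exact (hasDerivAt_mul_log_sum_exp_div hF hlam.ne' ht.ne').congr_of_eventuallyEq hG_eq

/-- Derivative of the entropy-regularized running maximum: for `t > 0`,
`G'(t) = ⟨b_t, r_t⟩ + λ H(b_t)` where `b_t = softmax((1/(λ t)) ∫_0^t r)` is the unique
maximizer of `⟨p, (1/t)∫_0^t r⟩ + λ H(p)`. -/
theorem deriv_entropy_regularized_running_max {A : Type*} [Fintype A] [Nonempty A]
    (r : ℝ → A → ℝ)
    (hrcont : ∀ a, Continuous (fun s => r s a))
    (hrbdd : ∃ M : ℝ, ∀ s a, |r s a| ≤ M)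
    (lam : ℝ) (hlam : 0 < lam)
    (G : ℝ → ℝ)
    (hG : ∀ t, G t = sSup {x : ℝ | ∃ p : A → ℝ, IsDist p ∧
      x = (∑ a, p a * (∫ s in (0:ℝ)..t, r s a)) + t * lam * entropy p})
    (b : ℝ → A → ℝ)
    (hb : ∀ t, b t = softmax (fun a => (1 / (lam * t)) * ∫ s in (0:ℝ)..t, r s a)) :
    ∀ t > (0:ℝ),
      (∀ p : A → ℝ, IsDist p →
        (∑ a, p a * ((1/t) * ∫ s in (0:ℝ)..t, r s a)) + lam * entropy p ≤
        (∑ a, b t a * ((1/t) * ∫ s in (0:ℝ)..t, r s a)) + lam * entropy (b t)) ∧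
      HasDerivAt G ((∑ a, b t a * r t a) + lam * entropy (b t)) t :=
  deriv_entropy_regularized_running_max_general r hrcont lam hlam G hG b hb
end
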